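/- Let γ be a connected graph with half-edges, 𝒱 ⊆ Ver with 𝒱 ≠ Ver, and C ∈ π₀(γ,𝒱). Then the number of crossing edges of C in γ plus the number of flags f ∈ F°_γ(𝒱) with ε(ϑ(f)) ∈ C is at least 2. -/

import Mathlib

/-- The set of edges of a graph with half-edges: unordered pairs `{f, ϑ f}`. -/
def edgeSet {F : Type*} (ϑ : F → F) : Set (Set F) :=
  {e | ∃ f, e = {f, ϑ f}}

/-- The edges both of whose flags have ε-image in `S`. -/
def edgesIn {V F : Type*} (ε : F → V) (ϑ : F → F) (S : Set V) : Set (Set F) :=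
  {e | ∃ f, e = {f, ϑ f} ∧ ε f ∈ S ∧ ε (ϑ f) ∈ S}

/-- One-step adjacency in the graph: `v` and `v'` are the two endpoints of an edge. -/
def Step {V F : Type*} (ε : F → V) (ϑ : F → F) (v v' : V) : Prop :=
  ∃ f, ε f = v ∧ ε (ϑ f) = v'

/-- The graph is connected: any two distinct vertices are joined by a chain of edges. -/
def IsConnectedGraph {V F : Type*} (ε : F → V) (ϑ : F → F) : Prop :=
  ∀ v v' : V, v ≠ v' → Relation.ReflTransGen (Step ε ϑ) v v'

/-- One-step adjacency within the induced subgraph on the vertex subset `S`. -/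
def StepIn {V F : Type*} (ε : F → V) (ϑ : F → F) (S : Set V) (v v' : V) : Prop :=
  v ∈ S ∧ v' ∈ S ∧ ∃ f, ε f = v ∧ ε (ϑ f) = v'

/-- The connected component of `v` in the induced subgraph on `S`. -/
def component {V F : Type*} (ε : F → V) (ϑ : F → F) (S : Set V) (v : V) : Set V :=
  {w | Relation.ReflTransGen (StepIn ε ϑ S) v w}

/-- `π₀(γ,S)`: the set of connected components of the induced subgraph on `S`. -/
def pi0 {V F : Type*} (ε : F → V) (ϑ : F → F) (S : Set V) : Set (Set V) :=
  {C | ∃ v ∈ S, C = component ε ϑ S v}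

/-- The crossing edges of a subset `C` of vertices: edges with exactly one flag
having ε-image in `C`. -/
def crossingEdges {V F : Type*} (ε : F → V) (ϑ : F → F) (C : Set V) : Set (Set F) :=
  {e | ∃ f, e = {f, ϑ f} ∧ ε f ∉ C ∧ ε (ϑ f) ∈ C}

/-- One-step adjacency in the graph obtained by deleting the two flags `f₀`, `ϑ f₀`. -/
def StepAvoid {V F : Type*} (ε : F → V) (ϑ : F → F) (f₀ : F) (v v' : V) : Prop :=
  ∃ g, g ≠ f₀ ∧ g ≠ ϑ f₀ ∧ ε g = v ∧ ε (ϑ g) = v'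

/-- The flag `f₀` disconnects `C` from the rest of the graph: after deleting the flags
`f₀` and `ϑ f₀`, there is no chain of edges from a vertex of `C` to a vertex outside `C`. -/
def Disconnects {V F : Type*} (ε : F → V) (ϑ : F → F) (C : Set V) (f₀ : F) : Prop :=
  ∀ v ∈ C, ∀ v' ∉ C, ¬ Relation.ReflTransGen (StepAvoid ε ϑ f₀) v v'

/-- `F°_γ(S)`: the flags `f` with `ε f ∉ S` that disconnect from the rest of the graph
the connected component of the induced subgraph on `S` containing `ε (ϑ f)`. -/
def Fcirc {V F : Type*} (ε : F → V) (ϑ : F → F) (S : Set V) : Set F :=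
  {f | ε f ∉ S ∧ ε (ϑ f) ∈ S ∧ Disconnects ε ϑ (component ε ϑ S (ε (ϑ f))) f}

/-- `F†_γ(S)`: the flags of `F°_γ(S)` whose associated component carries no marked label. -/
def Fdagger {V F L : Type*} (ε : F → V) (ϑ : F → F) (εS : L → V) (S : Set V) : Set F :=
  {f | f ∈ Fcirc ε ϑ S ∧ ∀ s : L, εS s ∉ component ε ϑ S (ε (ϑ f))}

/-! A component `C` of `γ_𝒱` is nonempty and `γ` is connected, so since `C ⊆ 𝒱 ≠ Ver` some flag
crosses out of `C`; crossing flags (pointing into `C`) correspond bijectively to crossing edges.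
If there are two of them we are done. If there is exactly one, `g`, then every chain leaving `C`
must use the edge of `g`, so `g` disconnects `C`; and `ε g ∉ 𝒱` because `C` is a whole component
of `γ_𝒱`. Hence `g` also lies in `F°_γ(𝒱)`, giving the second unit. -/

def crossingFlags {V F : Type*} (ε : F → V) (ϑ : F → F) (C : Set V) : Set F :=
  {f | ε f ∉ C ∧ ε (ϑ f) ∈ C}

theorem Relation.ReflTransGen.exists_mem_notMem {α : Type*} {r : α → α → Prop} {s : Set α}
    {a b : α} (h : Relation.ReflTransGen r a b) (ha : a ∈ s) (hb : b ∉ s) :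
    ∃ x y, r x y ∧ x ∈ s ∧ y ∉ s := by
  induction h with
  | refl => exact absurd ha hb
  | @tail c d _ hcd ih =>
    by_cases hc : c ∈ s
    · exact ⟨c, d, hcd, hc, hb⟩
    · exact ih hc

section Graph

variable {V F : Type*} {ε : F → V} {ϑ : F → F} {S C : Set V}

theorem StepIn.symm (hinv : Function.Involutive ϑ) {v w : V} (h : StepIn ε ϑ S v w) :
    StepIn ε ϑ S w v := by
  obtain ⟨hv, hw, f, rfl, rfl⟩ := h
  exact ⟨hw, hv, ϑ f, rfl, by rw [hinv f]⟩

theorem subset_of_mem_pi0 (hC : C ∈ pi0 ε ϑ S) : C ⊆ S := by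
  obtain ⟨v, hv, rfl⟩ := hC
  intro w hw
  rcases hw.cases_tail with rfl | ⟨c, -, -, hw, -⟩
  · exact hv
  · exact hw

theorem nonempty_of_mem_pi0 (hC : C ∈ pi0 ε ϑ S) : C.Nonempty := by
  obtain ⟨v, -, rfl⟩ := hC
  exact ⟨v, Relation.ReflTransGen.refl⟩

theorem mem_of_mem_pi0_of_stepIn (hC : C ∈ pi0 ε ϑ S) {w w' : V} (hw : w ∈ C)
    (h : StepIn ε ϑ S w w') : w' ∈ C := by
  obtain ⟨v, -, rfl⟩ := hC
  exact Relation.ReflTransGen.tail hw h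

theorem component_eq_of_mem_pi0 (hinv : Function.Involutive ϑ) (hC : C ∈ pi0 ε ϑ S) {w : V}
    (hw : w ∈ C) : component ε ϑ S w = C := by
  obtain ⟨v, -, rfl⟩ := hC
  have : Std.Symm (StepIn ε ϑ S) := ⟨fun _ _ => StepIn.symm hinv⟩
  ext x
  exact ⟨hw.trans, (Std.Symm.symm _ _ hw).trans⟩

theorem ncard_crossingEdges (C : Set V) :
    (crossingEdges ε ϑ C).ncard = (crossingFlags ε ϑ C).ncard := by
  have himage : crossingEdges ε ϑ C = (fun g => ({g, ϑ g} : Set F)) '' crossingFlags ε ϑ C := by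
    ext e
    constructor
    · rintro ⟨f, rfl, hf⟩
      exact ⟨f, hf, rfl⟩
    · rintro ⟨f, hf, rfl⟩
      exact ⟨f, rfl, hf⟩
  rw [himage, Set.InjOn.ncard_image]
  rintro g₁ ⟨hg₁, -⟩ g₂ ⟨-, hg₂⟩ he
  have hmem : g₁ ∈ ({g₂, ϑ g₂} : Set F) := by
    simp only at he
    exact he ▸ Set.mem_insert g₁ _
  rcases hmem with h | h
  · exact h
  · exact absurd (h ▸ hg₂) hg₁

theorem crossingFlags_nonempty (hconn : IsConnectedGraph ε ϑ) {u v : V} (hu : u ∉ C)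
    (hv : v ∈ C) : (crossingFlags ε ϑ C).Nonempty := by
  obtain ⟨-, -, ⟨f, rfl, rfl⟩, hf⟩ :=
    (hconn u v (fun h => hu (h ▸ hv))).exists_mem_notMem (s := Cᶜ) hu (by simpa using hv)
  exact ⟨f, hf.1, not_not.1 hf.2⟩

theorem notMem_of_mem_crossingFlags (hinv : Function.Involutive ϑ) (hC : C ∈ pi0 ε ϑ S) {g : F}
    (hg : g ∈ crossingFlags ε ϑ C) : ε g ∉ S := fun hgS =>
  hg.1 <| mem_of_mem_pi0_of_stepIn hC hg.2
    ⟨subset_of_mem_pi0 hC hg.2, hgS, ϑ g, rfl, by rw [hinv g]⟩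

theorem disconnects_of_crossingFlags_subsingleton (hinv : Function.Involutive ϑ) {g : F}
    (hg : g ∈ crossingFlags ε ϑ C) (hsub : (crossingFlags ε ϑ C).Subsingleton) :
    Disconnects ε ϑ C g := by
  intro x hx y hy hchain
  obtain ⟨-, -, ⟨f, -, hfg, rfl, rfl⟩, hfC, hfC'⟩ := hchain.exists_mem_notMem hx hy
  have hϑf : ϑ f ∈ crossingFlags ε ϑ C := ⟨hfC', by rwa [hinv f]⟩
  exact hfg (by rw [← hsub hϑf hg, hinv f])

theorem mem_Fcirc_of_crossingFlags_subsingleton (hinv : Function.Involutive ϑ)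
    (hC : C ∈ pi0 ε ϑ S) {g : F} (hg : g ∈ crossingFlags ε ϑ C)
    (hsub : (crossingFlags ε ϑ C).Subsingleton) : g ∈ Fcirc ε ϑ S := by
  refine ⟨notMem_of_mem_crossingFlags hinv hC hg, subset_of_mem_pi0 hC hg.2, ?_⟩
  rw [component_eq_of_mem_pi0 hinv hC hg.2]
  exact disconnects_of_crossingFlags_subsingleton hinv hg hsub

end Graph

theorem stmt2_general {V F : Type*} [Fintype F]
    (ε : F → V) (ϑ : F → F) (hinv : Function.Involutive ϑ)
    (hconn : IsConnectedGraph ε ϑ)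
    (𝒱 : Set V) (h𝒱 : 𝒱 ≠ Set.univ)
    (C : Set V) (hC : C ∈ pi0 ε ϑ 𝒱) :
    2 ≤ (crossingEdges ε ϑ C).ncard + {f : F | f ∈ Fcirc ε ϑ 𝒱 ∧ ε (ϑ f) ∈ C}.ncard := by
  obtain ⟨u, hu⟩ := (Set.ne_univ_iff_exists_notMem 𝒱).1 h𝒱
  obtain ⟨v, hv⟩ := nonempty_of_mem_pi0 hC
  obtain ⟨g, hg⟩ := crossingFlags_nonempty hconn (fun h => hu (subset_of_mem_pi0 hC h)) hv
  have hG : 0 < (crossingFlags ε ϑ C).ncard := (Set.ncard_pos).2 ⟨g, hg⟩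
  rw [ncard_crossingEdges]
  rcases (crossingFlags ε ϑ C).subsingleton_or_nontrivial with hsub | hnt
  · have hFcirc : 0 < {f : F | f ∈ Fcirc ε ϑ 𝒱 ∧ ε (ϑ f) ∈ C}.ncard :=
      (Set.ncard_pos).2 ⟨g, mem_Fcirc_of_crossingFlags_subsingleton hinv hC hg hsub, hg.2⟩
    omega
  · have := Set.one_lt_ncard_iff_nontrivial.2 hnt
    omega

/-- For a connected graph with half-edges and a proper vertex subset `𝒱`,
the number of crossing edges of a connected component `C` of the induced subgraph on `𝒱`
plus the number of flags `f ∈ F°_γ(𝒱)` with `ε (ϑ f) ∈ C` is at least 2. -/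
theorem stmt2 {V F : Type*} [Fintype V] [Fintype F]
    (ε : F → V) (ϑ : F → F) (hinv : Function.Involutive ϑ) (hfpf : ∀ f, ϑ f ≠ f)
    (hconn : IsConnectedGraph ε ϑ)
    (𝒱 : Set V) (h𝒱 : 𝒱 ≠ Set.univ)
    (C : Set V) (hC : C ∈ pi0 ε ϑ 𝒱) :
    2 ≤ (crossingEdges ε ϑ C).ncard + {f : F | f ∈ Fcirc ε ϑ 𝒱 ∧ ε (ϑ f) ∈ C}.ncard :=
  stmt2_general ε ϑ hinv hconn 𝒱 h𝒱 C hC
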